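/- arXiv:0809.2719 — 2 statements merged into one kernel-verified Lean document; each statement's English description precedes it below -/
import Mathlib

section
/- Let φ be a continuous RDS on a Polish space E over an MDS (Ω,𝓕,P,(ϑ_t)). If φ has a strong C-attractor, then for every ε>0 there exists a compact subset C_ε of E such that for each δ>0 and each compact subset K of E one has P{K ⊆ ⋃_{s≥0} ⋂_{t≥s} φ(t,ϑ_{-t}ω)^{-1}(C_ε^δ)} ≥ 1−ε. -/
open MeasureTheory Set Filter Topology Metric

noncomputable section

/-- Hausdorff semi-distance `d(B, A) = sup_{b ∈ B} inf_{a ∈ A} d(b, a)`, valued in `ℝ≥0∞`. -/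
def semiDist {E : Type*} [PseudoEMetricSpace E] (B A : Set E) : ENNReal :=
  ⨆ b ∈ B, EMetric.infEdist b A

/-- A metric dynamical system (MDS) over the probability space `(Ω, 𝓕, P)`. -/
structure MetricDS (Ω : Type*) [MeasurableSpace Ω] (P : Measure Ω) where
  θ : ℝ → Ω → Ω
  measurable_theta : Measurable fun p : ℝ × Ω => θ p.1 p.2
  theta_add : ∀ s t : ℝ, θ (s + t) = θ s ∘ θ t
  theta_zero : θ 0 = id
  measurePreserving_theta : ∀ t : ℝ, MeasurePreserving (θ t) P P

/-- A continuous random dynamical system (RDS) `φ` on `E` over an MDS, with time `[0,∞)`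
(the map is defined for all real times, but only its restriction to `t ≥ 0` is constrained). -/
structure ContinuousRDS (E Ω : Type*) [MetricSpace E] [MeasurableSpace E]
    [MeasurableSpace Ω] (P : Measure Ω) extends MetricDS Ω P where
  φ : ℝ → E → Ω → E
  measurable_phi : Measurable fun p : ℝ × E × Ω => φ p.1 p.2.1 p.2.2
  cocycle : ∀ s t : ℝ, 0 ≤ s → 0 ≤ t → ∀ x ω, φ (t + s) x ω = φ t (φ s x ω) (θ s ω)
  phi_zero : ∀ x ω, φ 0 x ω = x
  continuous_phi : ∀ t : ℝ, 0 ≤ t → ∀ ω, Continuous fun x => φ t x ω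

variable {E Ω : Type*} [MetricSpace E] [MeasurableSpace E] [MeasurableSpace Ω] {P : Measure Ω}

/-- A compact random set: values are nonempty compact subsets of `E`, and
`ω ↦ d(x, K ω)` is measurable for every `x`. -/
def IsCompactRandomSet (K : Ω → Set E) : Prop :=
  (∀ ω, IsCompact (K ω)) ∧ (∀ ω, (K ω).Nonempty) ∧
    ∀ x : E, Measurable fun ω => infDist x (K ω)

/-- Strict `φ`-invariance: for each `t ≥ 0`, a.s. `φ(t,ω)(A(ω)) = A(ϑ_t ω)`. -/
def StrictlyInvariant (ψ : ContinuousRDS E Ω P) (A : Ω → Set E) : Prop :=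
  ∀ t : ℝ, 0 ≤ t → ∀ᵐ ω ∂P, (fun x => ψ.φ t x ω) '' A ω = A (ψ.θ t ω)

/-- `K` attracts `B` strongly: `d(φ(t, ϑ_{-t} ω)(B), K(ω)) → 0` almost surely. -/
def StronglyAttracts (ψ : ContinuousRDS E Ω P) (K : Ω → Set E) (B : Set E) : Prop :=
  ∀ᵐ ω ∂P, Tendsto (fun t : ℝ =>
    semiDist ((fun x => ψ.φ t x (ψ.θ (-t) ω)) '' B) (K ω)) atTop (𝓝 0)

/-- `K` attracts `B` weakly: `d(φ(t, ϑ_{-t} ω)(B), K(ω)) → 0` in probability. -/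
def WeaklyAttracts (ψ : ContinuousRDS E Ω P) (K : Ω → Set E) (B : Set E) : Prop :=
  ∀ ε : ENNReal, 0 < ε → Tendsto (fun t : ℝ =>
    P {ω | ε < semiDist ((fun x => ψ.φ t x (ψ.θ (-t) ω)) '' B) (K ω)}) atTop (𝓝 0)

/-- Forward version of weak attraction: `sup_{x ∈ B} d(φ(t,ω)(x), A(ϑ_t ω)) → 0` in probability. -/
def WeaklyAttractsForward (ψ : ContinuousRDS E Ω P) (A : Ω → Set E) (B : Set E) : Prop :=
  ∀ ε : ENNReal, 0 < ε → Tendsto (fun t : ℝ =>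
    P {ω | ε < semiDist ((fun x => ψ.φ t x ω) '' B) (A (ψ.θ t ω))}) atTop (𝓝 0)

/-- A strong `𝓑`-attractor. -/
def IsStrongAttractor (ψ : ContinuousRDS E Ω P) (𝓑 : Set (Set E)) (A : Ω → Set E) : Prop :=
  IsCompactRandomSet A ∧ StrictlyInvariant ψ A ∧ ∀ B ∈ 𝓑, StronglyAttracts ψ A B

/-- A weak `𝓑`-attractor. -/
def IsWeakAttractor (ψ : ContinuousRDS E Ω P) (𝓑 : Set (Set E)) (A : Ω → Set E) : Prop :=
  IsCompactRandomSet A ∧ StrictlyInvariant ψ A ∧ ∀ B ∈ 𝓑, WeaklyAttractsForward ψ A B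

/-- The `Ω`-limit set of a set `B ⊆ E`:
`Ω_B(ω) = ⋂_{T ≥ 0} closure (⋃_{t ≥ T} φ(t, ϑ_{-t} ω)(B))`. -/
def omegaLimitSet (ψ : ContinuousRDS E Ω P) (B : Set E) (ω : Ω) : Set E :=
  ⋂ T ∈ Ici (0:ℝ), closure (⋃ t ∈ Ici T, (fun x => ψ.φ t x (ψ.θ (-t) ω)) '' B)

/-!
The law of a compact random set `A` is tight. For each radius `1/(k+1)`, finitely many closed balls
centred on a dense sequence cover `A ω` outside an event of probability `η k`, with `∑ η k ≤ ε`;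
the intersection over `k` of these finite unions is a compact `C` with `P {A ⊄ C} ≤ ε`.
On `{A ⊆ C}`, strong attraction of `K` eventually pushes `φ(t, ϑ_{-t} ω) K` into
`A(ω)^δ ⊆ C^δ`.
-/

open TopologicalSpace

lemma isCompact_iInter_biUnion_closedBall {X : Type*} [MetricSpace X] [CompleteSpace X]
    {s : ℕ → Set X} (hs : ∀ k, (s k).Finite) {r : ℕ → ℝ} (hr : Tendsto r atTop (𝓝 0)) :
    IsCompact (⋂ k, ⋃ x ∈ s k, closedBall x (r k)) := by
  refine TotallyBounded.isCompact_of_isClosed (totallyBounded_iff.2 fun η hη => ?_)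
    (isClosed_iInter fun k => (hs k).isClosed_biUnion fun _ _ => isClosed_closedBall)
  obtain ⟨k, hk⟩ := (hr.eventually (gt_mem_nhds hη)).exists
  refine ⟨s k, hs k, (iInter_subset _ k).trans (iUnion₂_mono fun _ _ => ?_)⟩
  exact closedBall_subset_ball hk

lemma semiDist_le_ofReal_iff_subset_cthickening {X : Type*} [PseudoEMetricSpace X]
    {B A : Set X} {δ : ℝ} : semiDist B A ≤ ENNReal.ofReal δ ↔ B ⊆ cthickening δ A := by
  simp only [semiDist, iSup₂_le_iff, subset_def, mem_cthickening_iff]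
  rfl

lemma eventually_subset_cthickening_of_tendsto_semiDist {ι X : Type*} [PseudoEMetricSpace X]
    {l : Filter ι} {B : ι → Set X} {A : Set X} (h : Tendsto (fun i => semiDist (B i) A) l (𝓝 0))
    {δ : ℝ} (hδ : 0 < δ) : ∀ᶠ i in l, B i ⊆ cthickening δ A :=
  (h.eventually (gt_mem_nhds (ENNReal.ofReal_pos.2 hδ))).mono fun _ hi =>
    semiDist_le_ofReal_iff_subset_cthickening.1 hi.le

lemma subset_iUnion_iInter_preimage_of_eventually_image_subset {X Y : Type*} {f : ℝ → X → Y}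
    {K : Set X} {S : Set Y} (h : ∀ᶠ t in atTop, f t '' K ⊆ S) :
    K ⊆ ⋃ s ∈ Ici (0 : ℝ), ⋂ t ∈ Ici s, f t ⁻¹' S := by
  obtain ⟨s, hs⟩ := eventually_atTop.1 h
  intro x hx
  exact mem_biUnion (mem_Ici.2 (le_max_right s 0)) <|
    mem_iInter₂.2 fun t ht => hs t ((le_max_left s 0).trans ht) (mem_image_of_mem _ hx)

lemma ofReal_one_sub_le_measure_of_measure_compl_le [IsProbabilityMeasure P] {S : Set Ω}
    {ε : ℝ} (hε : 0 ≤ ε) (hS : P Sᶜ ≤ ENNReal.ofReal ε) : ENNReal.ofReal (1 - ε) ≤ P S := by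
  rw [ENNReal.ofReal_sub 1 hε, ENNReal.ofReal_one, tsub_le_iff_right]
  calc (1 : ENNReal) = P univ := measure_univ.symm
    _ ≤ P S + P Sᶜ := measure_univ_le_add_compl S
    _ ≤ P S + ENNReal.ofReal ε := add_le_add_right hS _

namespace IsCompactRandomSet

variable {X : Type*} [MetricSpace X] {A : Ω → Set X}

lemma measurableSet_inter_nonempty [SeparableSpace X] (hA : IsCompactRandomSet A)
    {U : Set X} (hU : IsOpen U) : MeasurableSet {ω | (A ω ∩ U).Nonempty} := by
  obtain ⟨D, hD, hDense⟩ := exists_countable_dense X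
  have hrepr : {ω | (A ω ∩ U).Nonempty} = ⋃ x ∈ D, ⋃ (q : ℚ) (_ : ball x q ⊆ U),
      {ω | infDist x (A ω) < q} := by
    ext ω
    simp only [mem_ofPred_eq, mem_iUnion, exists_prop]
    constructor
    · rintro ⟨a, haA, haU⟩
      obtain ⟨r, hr, hball⟩ := isOpen_iff.1 hU a haU
      obtain ⟨x, hxD, hxa⟩ := hDense.exists_dist_lt a (half_pos hr)
      rw [dist_comm] at hxa
      obtain ⟨q, hxq, hqr⟩ := exists_rat_btwn hxa
      refine ⟨x, hxD, q, fun y hy => hball ?_, (infDist_le_dist_of_mem haA).trans_lt hxq⟩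
      rw [mem_ball] at hy ⊢
      linarith [dist_triangle y x a]
    · rintro ⟨x, -, q, hball, hq⟩
      obtain ⟨a, haA, hxa⟩ := (infDist_lt_iff (hA.2.1 ω)).1 hq
      exact ⟨a, haA, hball (mem_ball'.2 hxa)⟩
  rw [hrepr]
  exact MeasurableSet.biUnion hD fun x _ => MeasurableSet.iUnion fun q =>
    MeasurableSet.iUnion fun _ => measurableSet_lt (hA.2.2 x) measurable_const

lemma measurableSet_not_subset [SeparableSpace X] (hA : IsCompactRandomSet A)
    {F : Set X} (hF : IsClosed F) : MeasurableSet {ω | ¬A ω ⊆ F} := by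
  simpa only [inter_compl_nonempty_iff] using hA.measurableSet_inter_nonempty hF.isOpen_compl

lemma exists_finite_measure_not_subset_biUnion_closedBall_le [SeparableSpace X]
    [Nonempty X] [IsFiniteMeasure P] (hA : IsCompactRandomSet A) {r : ℝ} (hr : 0 < r) {η : ENNReal}
    (hη : 0 < η) : ∃ s : Set X, s.Finite ∧ P {ω | ¬A ω ⊆ ⋃ x ∈ s, closedBall x r} ≤ η := by
  obtain ⟨u, hu⟩ := exists_dense_seq X
  have hIio_mono : Monotone fun N => u '' Iio N := fun _ _ h => image_mono (Iio_subset_Iio h)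
  set F : ℕ → Set X := fun N => ⋃ x ∈ u '' Iio N, closedBall x r
  have hcovered : ∀ ω, ∃ N, A ω ⊆ F N := by
    intro ω
    have hcover : A ω ⊆ ⋃ N, ⋃ x ∈ u '' Iio N, ball x r := fun y _ => by
      obtain ⟨n, hn⟩ := (denseRange_iff.1 hu) y r hr
      exact mem_iUnion.2 ⟨n + 1, mem_biUnion (mem_image_of_mem u (Nat.lt_succ_self n))
        (mem_ball.2 hn)⟩
    obtain ⟨N, hN⟩ := (hA.1 ω).elim_directed_cover _ (fun N => isOpen_biUnion fun _ _ =>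
      isOpen_ball) hcover (Monotone.directed_le fun _ _ h => biUnion_subset_biUnion_left
        (hIio_mono h))
    exact ⟨N, hN.trans (iUnion₂_mono fun _ _ => ball_subset_closedBall)⟩
  set B : ℕ → Set Ω := fun N => {ω | ¬A ω ⊆ F N}
  have hB_meas : ∀ N, MeasurableSet (B N) := fun N =>
    hA.measurableSet_not_subset ((finite_Iio N).image u |>.isClosed_biUnion fun _ _ =>
      isClosed_closedBall)
  have hB_anti : Antitone B := fun _ _ h _ hω hsub =>
    hω (hsub.trans (biUnion_subset_biUnion_left (hIio_mono h)))
  have hB_empty : ⋂ N, B N = ∅ := eq_empty_of_forall_notMem fun ω hω =>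
    (hcovered ω).elim fun N hN => mem_iInter.1 hω N hN
  have hB_lim : Tendsto (P ∘ B) atTop (𝓝 0) := by
    simpa only [hB_empty, measure_empty] using tendsto_measure_iInter_atTop
      (fun N => (hB_meas N).nullMeasurableSet) hB_anti ⟨0, measure_ne_top P _⟩
  obtain ⟨N, hN⟩ := (hB_lim.eventually (gt_mem_nhds hη)).exists
  exact ⟨u '' Iio N, (finite_Iio N).image u, hN.le⟩

lemma exists_isCompact_measure_not_subset_le [CompleteSpace X] [SeparableSpace X]
    [IsFiniteMeasure P] (hA : IsCompactRandomSet A) {ε : ENNReal} (hε : 0 < ε) :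
    ∃ C : Set X, IsCompact C ∧ P {ω | ¬A ω ⊆ C} ≤ ε := by
  cases isEmpty_or_nonempty X
  · exact ⟨∅, isCompact_empty, by simp [eq_empty_of_isEmpty]⟩
  obtain ⟨η, hη_pos, hη_sum⟩ := ENNReal.exists_pos_sum_of_countable hε.ne' ℕ
  choose s hs_fin hs using fun k : ℕ =>
    hA.exists_finite_measure_not_subset_biUnion_closedBall_le (P := P)
      (Nat.one_div_pos_of_nat (n := k)) (ENNReal.coe_pos.2 (hη_pos k))
  refine ⟨_, isCompact_iInter_biUnion_closedBall hs_fin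
    tendsto_one_div_add_atTop_nhds_zero_nat, ?_⟩
  calc P {ω | ¬A ω ⊆ ⋂ k, ⋃ x ∈ s k, closedBall x (1 / (k + 1))}
      ≤ P (⋃ k : ℕ, {ω | ¬A ω ⊆ ⋃ x ∈ s k, closedBall x (1 / (k + 1))}) :=
        measure_mono fun ω hω => by
          simpa only [subset_iInter_iff, not_forall, mem_iUnion, mem_ofPred_eq] using hω
    _ ≤ ∑' k, P {ω | ¬A ω ⊆ ⋃ x ∈ s k, closedBall x (1 / (k + 1))} := measure_iUnion_le _
    _ ≤ ∑' k, (η k : ENNReal) := ENNReal.tsum_le_tsum hs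
    _ ≤ ε := hη_sum.le

end IsCompactRandomSet

theorem strongC_attractor_necessary_condition_general
    [CompleteSpace E] [SecondCountableTopology E] [IsProbabilityMeasure P]
    (ψ : ContinuousRDS E Ω P) (A : Ω → Set E)
    (hA : IsStrongAttractor ψ {K : Set E | IsCompact K} A) :
    ∀ ε : ℝ, 0 < ε → ∃ Cε : Set E, IsCompact Cε ∧
      ∀ δ : ℝ, 0 < δ → ∀ K : Set E, IsCompact K →
        ENNReal.ofReal (1 - ε) ≤
          P {ω | K ⊆ ⋃ s ∈ Ici (0:ℝ), ⋂ t ∈ Ici s,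
              (fun x => ψ.φ t x (ψ.θ (-t) ω)) ⁻¹' cthickening δ Cε} := by
  intro ε hε
  obtain ⟨C, hC, hAC⟩ :=
    hA.1.exists_isCompact_measure_not_subset_le (P := P) (ENNReal.ofReal_pos.2 hε)
  refine ⟨C, hC, fun δ hδ K hK =>
    ofReal_one_sub_le_measure_of_measure_compl_le hε.le ((measure_mono_ae ?_).trans hAC)⟩
  filter_upwards [hA.2.2 K hK] with ω hω hωS hsub
  exact hωS <| subset_iUnion_iInter_preimage_of_eventually_image_subset <|
    (eventually_subset_cthickening_of_tendsto_semiDist hω hδ).mono fun _ ht =>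
      ht.trans (cthickening_subset_of_subset δ hsub)

/-- If `φ` has a strong `C`-attractor, then for every `ε > 0` there is a compact `Cε` such that
for each `δ > 0` and each compact `K ⊆ E`,
`P{K ⊆ ⋃_{s ≥ 0} ⋂_{t ≥ s} φ(t, ϑ_{-t} ω)⁻¹(Cε^δ)} ≥ 1 - ε`. -/
theorem strongC_attractor_necessary_condition
    [CompleteSpace E] [SecondCountableTopology E] [BorelSpace E] [IsProbabilityMeasure P]
    (ψ : ContinuousRDS E Ω P) (A : Ω → Set E)
    (hA : IsStrongAttractor ψ {K : Set E | IsCompact K} A) :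
    ∀ ε : ℝ, 0 < ε → ∃ Cε : Set E, IsCompact Cε ∧
      ∀ δ : ℝ, 0 < δ → ∀ K : Set E, IsCompact K →
        ENNReal.ofReal (1 - ε) ≤
          P {ω | K ⊆ ⋃ s ∈ Ici (0:ℝ), ⋂ t ∈ Ici s,
              (fun x => ψ.φ t x (ψ.θ (-t) ω)) ⁻¹' cthickening δ Cε} :=
  strongC_attractor_necessary_condition_general ψ A hA
end
end

section
/- Let φ be a continuous RDS on a Polish space E over an MDS (Ω,𝓕,P,(ϑ_t)). If there exists a compact random set K which strongly attracts every compact subset of E, then φ has a strong C-attractor. -/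
open MeasureTheory Set Filter Topology Metric

noncomputable section

variable {E Ω : Type*} [MetricSpace E] [MeasurableSpace E] [MeasurableSpace Ω] {P : Measure Ω}

/-!
Since `K` is a compact random set in a Polish space it is tight: there are compact sets `C m`
with `P {K ⊄ C m} → 0`. Poincaré recurrence for `ϑ_{-1}` then shows that almost every `ω`
visits, at infinitely many integer times `-s`, an event on which `K (ϑ_{-s} ω) ⊆ C m`. Going back
to such a time, a limit point of `φ(t, ϑ_{-t} ω) B` is `φ(s, ϑ_{-s} ω)` of a point close to
`K (ϑ_{-s} ω) ⊆ C m`, so it lies in the integer-time `Ω`-limit set of `C m`. Hence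
`A ω = closure (⋃ m, Ω_{C m} ω)` contains the `Ω`-limit set of every compact `B` and attracts `B`.
Invariance of `A` is inherited from the invariance of `Ω`-limit sets of attracted sets, and
describing `A` through integer times and countable dense subsets of the `C m` makes
`ω ↦ d(x, A ω)` measurable.
-/

open ENNReal

section SemiDist

variable {X : Type*} [PseudoEMetricSpace X] {A A' B B' : Set X} {c : ℝ≥0∞}

theorem semiDist_le_iff : semiDist B A ≤ c ↔ ∀ b ∈ B, infEDist b A ≤ c :=
  iSup₂_le_iff

theorem infEDist_le_semiDist {b : X} (hb : b ∈ B) : infEDist b A ≤ semiDist B A :=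
  semiDist_le_iff.1 le_rfl b hb

theorem lt_semiDist_iff : c < semiDist B A ↔ ∃ b ∈ B, c < infEDist b A := by
  simpa using (semiDist_le_iff (c := c) (B := B) (A := A)).not

theorem semiDist_mono (hB : B' ⊆ B) (hA : A ⊆ A') : semiDist B' A' ≤ semiDist B A :=
  semiDist_le_iff.2 fun _ hb => (infEDist_anti hA).trans (infEDist_le_semiDist (hB hb))

theorem semiDist_closure_left : semiDist (closure B) A = semiDist B A := by
  refine le_antisymm (semiDist_le_iff.2 fun b hb => ?_) (semiDist_mono subset_closure le_rfl)
  have hcl : IsClosed {b | infEDist b A ≤ semiDist B A} :=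
    isClosed_le continuous_infEDist continuous_const
  exact hcl.closure_subset_iff.2 (fun _ => infEDist_le_semiDist) hb

theorem tendsto_infEDist_of_tendsto_semiDist {ι : Type*} {l : Filter ι} {S : ι → Set X}
    (h : Tendsto (fun i => semiDist (S i) A) l (𝓝 0)) {p : ι → X} (hp : ∀ i, p i ∈ S i) :
    Tendsto (fun i => infEDist (p i) A) l (𝓝 0) :=
  tendsto_of_tendsto_of_tendsto_of_le_of_le tendsto_const_nhds h (fun _ => zero_le)
    fun i => infEDist_le_semiDist (hp i)

theorem tendsto_semiDist_mono {ι : Type*} {l : Filter ι} {S S' : ι → Set X}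
    (h : Tendsto (fun i => semiDist (S i) A) l (𝓝 0)) (hS : ∀ i, S' i ⊆ S i) (hA : A ⊆ A') :
    Tendsto (fun i => semiDist (S' i) A') l (𝓝 0) :=
  tendsto_of_tendsto_of_tendsto_of_le_of_le tendsto_const_nhds h (fun _ => zero_le)
    fun i => semiDist_mono (hS i) hA

theorem semiDist_range {ι : Sort*} (g : ι → X) : semiDist (range g) A = ⨆ i, infEDist (g i) A :=
  iSup_range

end SemiDist

section CompactAttraction

variable {X : Type*} [PseudoEMetricSpace X] {K : Set X}

theorem IsCompact.exists_tendsto_subseq_of_tendsto_infEDist (hK : IsCompact K) {p : ℕ → X}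
    (hp : Tendsto (fun j => infEDist (p j) K) atTop (𝓝 0)) :
    ∃ z ∈ K, ∃ σ : ℕ → ℕ, StrictMono σ ∧ Tendsto (p ∘ σ) atTop (𝓝 z) := by
  rcases K.eq_empty_or_nonempty with rfl | hne
  · simp at hp
  choose q hqK hq using fun j => hK.exists_infEDist_eq_edist hne (p j)
  obtain ⟨z, hzK, σ, hσ, hqz⟩ := hK.tendsto_subseq hqK
  refine ⟨z, hzK, σ, hσ, tendsto_iff_edist_tendsto_0.2 ?_⟩
  have hpq : Tendsto (fun j => edist (p (σ j)) (q (σ j))) atTop (𝓝 0) := by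
    simpa only [Function.comp_def, hq] using hp.comp hσ.tendsto_atTop
  have hsum := hpq.add (tendsto_iff_edist_tendsto_0.1 hqz)
  rw [add_zero] at hsum
  exact tendsto_of_tendsto_of_tendsto_of_le_of_le tendsto_const_nhds hsum (fun _ => zero_le)
    fun _ => edist_triangle _ _ _

theorem iInter_subset_of_tendsto_semiDist [T2Space X] {S : ℕ → Set X} (hK : IsCompact K)
    (hSK : Tendsto (fun T => semiDist (S T) K) atTop (𝓝 0)) : ⋂ T, S T ⊆ K := by
  intro z hz
  have h0 : infEDist z K ≤ 0 :=
    ge_of_tendsto' hSK fun T => infEDist_le_semiDist (mem_iInter.1 hz T)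
  rw [← hK.isClosed.closure_eq, mem_closure_iff_infEDist_zero]
  exact nonpos_iff_eq_zero.1 h0

variable {S : ℕ → Set X}

theorem exists_mem_iInter_tendsto_subseq_of_tendsto_semiDist (hcl : ∀ T, IsClosed (S T))
    (hanti : Antitone S) (hK : IsCompact K) (hSK : Tendsto (fun T => semiDist (S T) K) atTop (𝓝 0))
    {y : ℕ → X} (hy : ∀ T, y T ∈ S T) :
    ∃ z ∈ ⋂ T, S T, ∃ σ : ℕ → ℕ, StrictMono σ ∧ Tendsto (y ∘ σ) atTop (𝓝 z) := by
  obtain ⟨z, -, σ, hσ, hz⟩ :=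
    hK.exists_tendsto_subseq_of_tendsto_infEDist (tendsto_infEDist_of_tendsto_semiDist hSK hy)
  refine ⟨z, mem_iInter.2 fun T => (hcl T).mem_of_tendsto hz ?_, σ, hσ, hz⟩
  filter_upwards [eventually_ge_atTop T] with j hj
  exact hanti (hj.trans hσ.le_apply) (hy (σ j))

theorem nonempty_iInter_of_tendsto_semiDist (hcl : ∀ T, IsClosed (S T)) (hanti : Antitone S)
    (hK : IsCompact K) (hSK : Tendsto (fun T => semiDist (S T) K) atTop (𝓝 0))
    (hne : ∀ T, (S T).Nonempty) :
    (⋂ T, S T).Nonempty := by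
  choose y hy using hne
  obtain ⟨z, hz, -⟩ := exists_mem_iInter_tendsto_subseq_of_tendsto_semiDist hcl hanti hK hSK hy
  exact ⟨z, hz⟩

theorem infEDist_iInter_of_tendsto_semiDist (hcl : ∀ T, IsClosed (S T)) (hanti : Antitone S)
    (hK : IsCompact K) (hSK : Tendsto (fun T => semiDist (S T) K) atTop (𝓝 0))
    (x : X) :
    infEDist x (⋂ T, S T) = ⨆ T, infEDist x (S T) := by
  refine le_antisymm ?_ (iSup_le fun T => infEDist_anti (iInter_subset _ T))
  set r := ⨆ T, infEDist x (S T)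
  rcases eq_or_ne r ⊤ with hr | hr
  · exact hr ▸ le_top
  have hlt : ∀ T, infEDist x (S T) < r + (T : ℝ≥0∞)⁻¹ := fun T =>
    (le_iSup (fun T => infEDist x (S T)) T).trans_lt
      (ENNReal.lt_add_right hr (ENNReal.inv_ne_zero.2 (natCast_ne_top T)))
  choose y hyS hy using fun T => infEDist_lt_iff.1 (hlt T)
  obtain ⟨z, hz, σ, hσ, hyz⟩ :=
    exists_mem_iInter_tendsto_subseq_of_tendsto_semiDist hcl hanti hK hSK hyS
  have hlim : Tendsto (fun j => r + ((σ j : ℕ) : ℝ≥0∞)⁻¹) atTop (𝓝 r) := by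
    simpa using tendsto_const_nhds.add (ENNReal.tendsto_inv_nat_nhds_zero.comp hσ.tendsto_atTop)
  exact (infEDist_le_edist_of_mem hz).trans
    (le_of_tendsto_of_tendsto' (tendsto_const_nhds.edist hyz) hlim fun j => (hy (σ j)).le)

end CompactAttraction

section SeparableMetric

variable {X : Type*} [PseudoMetricSpace X]

theorem forall_infDist_le_iff_of_denseRange {u : ℕ → X} (hu : DenseRange u) {S F : Set X}
    (hS : S.Nonempty) {c : ℝ} :
    (∀ y ∈ S, infDist y F ≤ c) ↔ ∀ i, infDist (u i) F ≤ c + infDist (u i) S := by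
  constructor
  · intro h i
    have hle : infDist (u i) F - c ≤ infDist (u i) S :=
      (le_infDist hS).2 fun y hy => by
        linarith [h y hy, infDist_le_infDist_add_dist (x := u i) (y := y) (s := F)]
    linarith
  · intro h y hy
    refine le_of_forall_pos_le_add fun δ hδ => ?_
    obtain ⟨i, hi⟩ := hu.exists_dist_lt y (half_pos hδ)
    linarith [h i, infDist_le_infDist_add_dist (x := y) (y := u i) (s := F),
      infDist_le_dist_of_mem (x := u i) hy, dist_comm y (u i)]

theorem isCompact_setOf_forall_infDist_le [CompleteSpace X] {F : ℕ → Set X}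
    (hF : ∀ j, (F j).Finite) (hne : ∀ j, (F j).Nonempty) {δ : ℕ → ℝ}
    (hδ : Tendsto δ atTop (𝓝 0)) : IsCompact {y | ∀ j, infDist y (F j) ≤ δ j} := by
  refine TotallyBounded.isCompact_of_isClosed ?_ ?_
  · refine Metric.totallyBounded_iff.2 fun ε hε => ?_
    obtain ⟨j, hj⟩ := (hδ.eventually (gt_mem_nhds hε)).exists
    refine ⟨F j, hF j, fun y hy => ?_⟩
    obtain ⟨p, hp, hyp⟩ := (infDist_lt_iff (hne j)).1 ((hy j).trans_lt hj)
    exact mem_iUnion₂.2 ⟨p, hp, hyp⟩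
  · rw [ofPred_forall]
    exact isClosed_iInter fun j => isClosed_le (continuous_infDist_pt _) continuous_const

theorem IsCompact.exists_closure_range_eq {X : Type*} [MetricSpace X] {C : Set X}
    (hC : IsCompact C) (hne : C.Nonempty) : ∃ d : ℕ → X, closure (range d) = C := by
  obtain ⟨t, htC, htc, hCt⟩ := hC.isSeparable.exists_countable_dense_subset
  obtain ⟨d, rfl⟩ := htc.exists_eq_range (closure_nonempty_iff.1 (hne.mono hCt))
  exact ⟨d, Subset.antisymm (closure_minimal htC hC.isClosed) hCt⟩

end SeparableMetric

namespace IsCompactRandomSet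

variable {X : Type*} [MetricSpace X] {K : Ω → Set X}

theorem measurable_infEDist [MeasurableSpace X] [SecondCountableTopology X]
    [OpensMeasurableSpace X] (hK : IsCompactRandomSet K) {g : Ω → X}
    (hg : Measurable g) : Measurable fun ω => infEDist (g ω) (K ω) := by
  have hx : ∀ x, Measurable fun ω => infEDist x (K ω) := fun x => by
    simpa only [Function.comp_def, infDist, ENNReal.ofReal_toReal (infEDist_ne_top (hK.2.1 _))]
      using ENNReal.measurable_ofReal.comp (hK.2.2 x)
  exact (measurable_uncurry_of_continuous_of_measurable (fun _ => continuous_infEDist) hx).comp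
    (hg.prodMk measurable_id)

theorem measurableSet_forall_infDist_le (hK : IsCompactRandomSet K) {u : ℕ → X}
    (hu : DenseRange u) (F : Set X) (c : ℝ) :
    MeasurableSet {ω | ∀ y ∈ K ω, infDist y F ≤ c} := by
  simp only [forall_infDist_le_iff_of_denseRange hu (hK.2.1 _), ofPred_forall]
  exact .iInter fun i => measurableSet_le measurable_const (measurable_const.add (hK.2.2 (u i)))

theorem exists_finite_measure_compl_le [IsFiniteMeasure P] (hK : IsCompactRandomSet K)
    {u : ℕ → X} (hu : DenseRange u) {δ : ℝ} (hδ : 0 < δ) {ε : ℝ≥0∞} (hε : ε ≠ 0) :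
    ∃ n, P {ω | ∀ y ∈ K ω, infDist y (u '' Iic n) ≤ δ}ᶜ ≤ ε := by
  set A := fun n : ℕ => {ω | ∀ y ∈ K ω, infDist y (u '' Iic n) ≤ δ}
  have hmono : Monotone A := fun n n' h ω hω y hy =>
    (infDist_le_infDist_of_subset (image_mono (Iic_subset_Iic.2 h)) (nonempty_Iic.image u)).trans
      (hω y hy)
  have hcover : ∀ ω, ∃ n, ω ∈ A n := fun ω => by
    obtain ⟨I, hI⟩ := (hK.1 ω).elim_finite_subcover (fun i => ball (u i) δ)
      (fun _ => isOpen_ball) fun y _ => mem_iUnion.2 (hu.exists_dist_lt y hδ)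
    refine ⟨I.sup id, fun y hy => ?_⟩
    obtain ⟨i, hi, hyi⟩ := mem_iUnion₂.1 (hI hy)
    have hui : u i ∈ u '' Iic (I.sup id) := mem_image_of_mem u (Finset.le_sup (f := id) hi)
    exact (infDist_le_dist_of_mem hui).trans (mem_ball.1 hyi).le
  have hlim : Tendsto (fun n => P (A n)ᶜ) atTop (𝓝 0) := by
    have h := tendsto_measure_iInter_atTop (μ := P) (s := fun n => (A n)ᶜ)
      (fun n => (hK.measurableSet_forall_infDist_le hu _ δ).compl.nullMeasurableSet)
      (fun _ _ h => compl_subset_compl.2 (hmono h)) ⟨0, measure_ne_top P _⟩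
    rwa [← compl_iUnion, iUnion_eq_univ_iff.2 hcover, compl_univ, measure_empty] at h
  exact (hlim.eventually (ge_mem_nhds (pos_iff_ne_zero.2 hε))).exists

theorem exists_isCompact_measure_compl_le [CompleteSpace X] [TopologicalSpace.SeparableSpace X]
    [Nonempty X] [IsFiniteMeasure P] (hK : IsCompactRandomSet K) {ε : ℝ≥0∞} (hε : ε ≠ 0) :
    ∃ C, IsCompact C ∧ ∃ G, MeasurableSet G ∧ (∀ ω ∈ G, K ω ⊆ C) ∧ P Gᶜ ≤ ε := by
  obtain ⟨u, hu⟩ := TopologicalSpace.exists_dense_seq X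
  obtain ⟨ε', hε'0, hε'ε⟩ := ENNReal.exists_pos_sum_of_countable' hε ℕ
  choose n hn using fun j : ℕ =>
    hK.exists_finite_measure_compl_le (P := P) hu (δ := 1 / ((j : ℝ) + 1))
      Nat.one_div_pos_of_nat (hε'0 j).ne'
  refine ⟨_, isCompact_setOf_forall_infDist_le (fun j => (finite_Iic (n j)).image u)
    (fun _ => nonempty_Iic.image u) tendsto_one_div_add_atTop_nhds_zero_nat,
    _, .iInter fun j => hK.measurableSet_forall_infDist_le hu _ _, fun ω hω y hy j =>
    mem_iInter.1 hω j y hy, ?_⟩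
  rw [compl_iInter]
  exact (measure_iUnion_le _).trans ((ENNReal.tsum_le_tsum hn).trans hε'ε.le)

end IsCompactRandomSet

theorem StronglyAttracts.mono {ψ : ContinuousRDS E Ω P} {K : Ω → Set E} {B B' : Set E}
    (h : StronglyAttracts ψ K B) (hB : B' ⊆ B) : StronglyAttracts ψ K B' :=
  Filter.Eventually.mono h fun _ hω => tendsto_semiDist_mono hω (fun _ => image_mono hB) subset_rfl

namespace ContinuousRDS

variable (ψ : ContinuousRDS E Ω P) {B : Set E} {ω : Ω}

def pullback (t : ℝ) (ω : Ω) (x : E) : E := ψ.φ t x (ψ.θ (-t) ω)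

theorem theta_theta (a b : ℝ) (ω : Ω) : ψ.θ a (ψ.θ b ω) = ψ.θ (a + b) ω :=
  (congrFun (ψ.theta_add a b) ω).symm

theorem theta_theta_neg (t : ℝ) (ω : Ω) : ψ.θ t (ψ.θ (-t) ω) = ω := by
  rw [theta_theta, add_neg_cancel, ψ.theta_zero, id]

theorem phi_pullback {t u : ℝ} (ht : 0 ≤ t) (hu : 0 ≤ u) (ω : Ω) (x : E) :
    ψ.φ t (ψ.pullback u ω x) ω = ψ.pullback (t + u) (ψ.θ t ω) x := by
  have hθ : ψ.θ (-(t + u)) (ψ.θ t ω) = ψ.θ (-u) ω := by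
    rw [theta_theta, neg_add, neg_add_cancel_comm]
  rw [pullback, pullback, hθ, ψ.cocycle u t hu ht, theta_theta_neg]

theorem measurable_pullback (t : ℝ) (x : E) : Measurable fun ω => ψ.pullback t ω x :=
  ψ.measurable_phi.comp <| measurable_const.prodMk <|
    measurable_const.prodMk (ψ.measurePreserving_theta (-t)).measurable

theorem ae_theta (t : ℝ) {p : Ω → Prop} (h : ∀ᵐ ω ∂P, p ω) : ∀ᵐ ω ∂P, p (ψ.θ t ω) :=
  (ψ.measurePreserving_theta t).quasiMeasurePreserving.ae h

theorem theta_neg_one_iterate (n : ℕ) (ω : Ω) : (ψ.θ (-1))^[n] ω = ψ.θ (-n) ω := by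
  induction n with
  | zero => simp [ψ.theta_zero]
  | succ n ih =>
    rw [Function.iterate_succ_apply', ih, theta_theta]
    push_cast
    ring_nf

theorem ae_frequently_theta_neg_nat_mem [IsFiniteMeasure P] {G : Set Ω} (hG : MeasurableSet G) :
    ∀ᵐ ω ∂P, ω ∈ G → ∃ᶠ s : ℕ in atTop, ψ.θ (-s) ω ∈ G := by
  filter_upwards [(ψ.measurePreserving_theta (-1)).conservative.ae_mem_imp_frequently_image_mem
    hG.nullMeasurableSet] with ω hω hωG
  simpa only [theta_neg_one_iterate] using hω hωG

theorem mem_omegaLimitSet_of_tendsto {z : E} {t : ℕ → ℝ} {y : ℕ → E}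
    (ht : Tendsto t atTop atTop) (hy : ∀ j, y j ∈ B)
    (hz : Tendsto (fun j => ψ.pullback (t j) ω (y j)) atTop (𝓝 z)) :
    z ∈ omegaLimitSet ψ B ω := by
  refine mem_iInter₂.2 fun T _ => mem_closure_of_tendsto hz ?_
  filter_upwards [ht.eventually_ge_atTop T] with j hj
  exact mem_biUnion hj (mem_image_of_mem _ (hy j))

theorem exists_seq_of_mem_omegaLimitSet {z : E} (hz : z ∈ omegaLimitSet ψ B ω) :
    ∃ t : ℕ → ℝ, ∃ y : ℕ → E, (∀ j : ℕ, (j : ℝ) ≤ t j) ∧ (∀ j, y j ∈ B) ∧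
      Tendsto (fun j => ψ.pullback (t j) ω (y j)) atTop (𝓝 z) := by
  have hclose : ∀ j : ℕ, ∃ w ∈ ⋃ t ∈ Ici (j : ℝ), ψ.pullback t ω '' B,
      dist z w < 1 / ((j : ℝ) + 1) := fun j =>
    Metric.mem_closure_iff.1 (mem_iInter₂.1 hz (j : ℝ) (mem_Ici.2 j.cast_nonneg)) _
      Nat.one_div_pos_of_nat
  choose w hw hwz using hclose
  simp only [mem_iUnion₂, mem_image, mem_Ici] at hw
  choose t ht y hy hyw using hw
  refine ⟨t, y, ht, hy, tendsto_iff_dist_tendsto_zero.2 <| squeeze_zero (fun _ => dist_nonneg)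
    (fun j => ?_) tendsto_one_div_add_atTop_nhds_zero_nat⟩
  rw [hyw, dist_comm]
  exact (hwz j).le

theorem exists_tendsto_subseq_mem_omegaLimitSet {K : Set E} (hK : IsCompact K)
    (hatt : Tendsto (fun t => semiDist (ψ.pullback t ω '' B) K) atTop (𝓝 0))
    {t : ℕ → ℝ} (ht : Tendsto t atTop atTop) {y : ℕ → E} (hy : ∀ j, y j ∈ B) :
    ∃ z ∈ omegaLimitSet ψ B ω, ∃ σ : ℕ → ℕ, StrictMono σ ∧
      Tendsto (fun j => ψ.pullback (t (σ j)) ω (y (σ j))) atTop (𝓝 z) := by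
  obtain ⟨z, -, σ, hσ, hz⟩ := hK.exists_tendsto_subseq_of_tendsto_infEDist
    (tendsto_infEDist_of_tendsto_semiDist (hatt.comp ht) fun j => mem_image_of_mem _ (hy j))
  exact ⟨z, ψ.mem_omegaLimitSet_of_tendsto (ht.comp hσ.tendsto_atTop) (fun j => hy (σ j)) hz,
    σ, hσ, hz⟩

theorem omegaLimitSet_subset_of_tendsto_semiDist {K : Set E} (hK : IsClosed K)
    (hatt : Tendsto (fun t => semiDist (ψ.pullback t ω '' B) K) atTop (𝓝 0)) :
    omegaLimitSet ψ B ω ⊆ K := by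
  intro z hz
  obtain ⟨t, y, ht, hy, hyz⟩ := ψ.exists_seq_of_mem_omegaLimitSet hz
  have hdist := tendsto_infEDist_of_tendsto_semiDist
    (hatt.comp (tendsto_atTop_mono ht tendsto_natCast_atTop_atTop))
    fun j => mem_image_of_mem (ψ.pullback (t j) ω) (hy j)
  rw [← hK.closure_eq, mem_closure_iff_infEDist_zero]
  exact tendsto_nhds_unique ((continuous_infEDist.tendsto z).comp hyz) hdist

theorem image_omegaLimitSet_subset {t : ℝ} (ht : 0 ≤ t) (ω : Ω) :
    (fun x => ψ.φ t x ω) '' omegaLimitSet ψ B ω ⊆ omegaLimitSet ψ B (ψ.θ t ω) := by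
  rintro _ ⟨z, hz, rfl⟩
  obtain ⟨s, y, hs, hy, hyz⟩ := ψ.exists_seq_of_mem_omegaLimitSet hz
  refine ψ.mem_omegaLimitSet_of_tendsto (tendsto_atTop_add_const_left _ t
    (tendsto_atTop_mono hs tendsto_natCast_atTop_atTop)) hy ?_
  refine (((ψ.continuous_phi t ht ω).tendsto z).comp hyz).congr fun j => ?_
  exact ψ.phi_pullback ht (j.cast_nonneg.trans (hs j)) ω (y j)

theorem omegaLimitSet_theta_subset_image {K : Set E} (hK : IsCompact K)
    (hatt : Tendsto (fun t => semiDist (ψ.pullback t ω '' B) K) atTop (𝓝 0)) {t : ℝ}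
    (ht : 0 ≤ t) :
    omegaLimitSet ψ B (ψ.θ t ω) ⊆ (fun x => ψ.φ t x ω) '' omegaLimitSet ψ B ω := by
  intro z' hz'
  obtain ⟨s, y, hs, hy, hyz'⟩ := ψ.exists_seq_of_mem_omegaLimitSet hz'
  have hst : Tendsto (fun j => s j - t) atTop atTop :=
    tendsto_atTop_add_const_right _ (-t) (tendsto_atTop_mono hs tendsto_natCast_atTop_atTop)
  obtain ⟨z, hz, σ, hσ, hzσ⟩ := ψ.exists_tendsto_subseq_mem_omegaLimitSet hK hatt hst hy
  refine ⟨z, hz, tendsto_nhds_unique (((ψ.continuous_phi t ht ω).tendsto z).comp hzσ) ?_⟩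
  refine (hyz'.comp hσ.tendsto_atTop).congr' ?_
  filter_upwards [(hst.comp hσ.tendsto_atTop).eventually_ge_atTop 0] with j hj
  simp only [Function.comp_apply] at hj ⊢
  rw [ψ.phi_pullback ht hj, add_sub_cancel]

theorem tendsto_semiDist_omegaLimitSet {K : Set E} (hK : IsCompact K)
    (hatt : Tendsto (fun t => semiDist (ψ.pullback t ω '' B) K) atTop (𝓝 0)) :
    Tendsto (fun t => semiDist (ψ.pullback t ω '' B) (omegaLimitSet ψ B ω)) atTop (𝓝 0) := by
  by_contra hnot
  simp only [ENNReal.tendsto_nhds_zero, not_forall, Filter.not_eventually, not_le] at hnot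
  obtain ⟨ε, hε, hfreq⟩ := hnot
  obtain ⟨t, ht, hlt⟩ := exists_seq_forall_of_frequently hfreq
  simp only [lt_semiDist_iff, exists_mem_image] at hlt
  choose y hy hyε using hlt
  obtain ⟨z, hz, σ, hσ, hzσ⟩ := ψ.exists_tendsto_subseq_mem_omegaLimitSet hK hatt ht hy
  have hnear := ((continuous_infEDist (s := omegaLimitSet ψ B ω)).tendsto z).comp hzσ
  rw [infEDist_zero_of_mem hz] at hnear
  obtain ⟨j, hj⟩ := (hnear.eventually (gt_mem_nhds hε)).exists
  exact (hyε (σ j)).not_gt hj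

theorem image_closure_iUnion_omegaLimitSet {ι : Sort*} {K : Set E} (hK : IsCompact K)
    {B : ι → Set E}
    (hatt : ∀ m, Tendsto (fun t => semiDist (ψ.pullback t ω '' B m) K) atTop (𝓝 0)) {t : ℝ}
    (ht : 0 ≤ t) :
    (fun x => ψ.φ t x ω) '' closure (⋃ m, omegaLimitSet ψ (B m) ω) =
      closure (⋃ m, omegaLimitSet ψ (B m) (ψ.θ t ω)) := by
  have hcont := ψ.continuous_phi t ht ω
  have hcpt : IsCompact (closure (⋃ m, omegaLimitSet ψ (B m) ω)) :=
    hK.of_isClosed_subset isClosed_closure <| closure_minimal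
      (iUnion_subset fun m => ψ.omegaLimitSet_subset_of_tendsto_semiDist hK.isClosed (hatt m))
      hK.isClosed
  refine Subset.antisymm ((image_closure_subset_closure_image hcont).trans (closure_mono ?_))
    (closure_minimal (iUnion_subset fun m => ?_) (hcpt.image hcont).isClosed)
  · rw [image_iUnion]
    exact iUnion_mono fun m => ψ.image_omegaLimitSet_subset ht ω
  · exact (ψ.omegaLimitSet_theta_subset_image hK (hatt m) ht).trans
      (image_mono ((subset_iUnion (fun m => omegaLimitSet ψ (B m) ω) m).trans subset_closure))

def pullbackTail (D : Set E) (ω : Ω) (T : ℕ) : Set E :=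
  ⋃ s : ℕ, ⋃ (_ : T ≤ s), ψ.pullback s ω '' D

def natOmegaLimitSet (D : Set E) (ω : Ω) : Set E :=
  ⋂ T : ℕ, closure (ψ.pullbackTail D ω T)

theorem pullbackTail_antitone (D : Set E) (ω : Ω) : Antitone (ψ.pullbackTail D ω) :=
  fun _ _ h => iUnion₂_mono' fun s hs => ⟨s, h.trans hs, subset_rfl⟩

theorem natOmegaLimitSet_subset_omegaLimitSet (D : Set E) (ω : Ω) :
    ψ.natOmegaLimitSet D ω ⊆ omegaLimitSet ψ D ω := by
  intro z hz
  refine mem_iInter₂.2 fun T _ => ?_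
  obtain ⟨n, hn⟩ := exists_nat_ge T
  refine closure_mono (iUnion₂_subset fun s hs => ?_) (mem_iInter.1 hz n)
  exact subset_biUnion_of_mem (u := fun t => ψ.pullback t ω '' D)
    (mem_Ici.2 (hn.trans (Nat.cast_le.2 hs)))

theorem mem_natOmegaLimitSet_of_frequently {B D : Set E} {L : ℕ → Set E}
    (hL : ∀ s, IsCompact (L s))
    (hatt : ∀ s : ℕ, Tendsto (fun t => semiDist (ψ.pullback t (ψ.θ (-(s : ℝ)) ω) '' B) (L s))
      atTop (𝓝 0))
    (hrec : ∃ᶠ s in atTop, L s ⊆ closure D) {z : E} (hz : z ∈ omegaLimitSet ψ B ω) :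
    z ∈ ψ.natOmegaLimitSet D ω := by
  refine mem_iInter.2 fun T => ?_
  rw [closure_eq_iInter_thickening]
  refine mem_iInter₂.2 fun ε hε => ?_
  obtain ⟨s, hsT, hsub⟩ := frequently_atTop.1 hrec T
  set ω' := ψ.θ (-(s : ℝ)) ω
  have hf := ψ.continuous_phi s s.cast_nonneg ω'
  -- `φ(s, ϑ_{-s} ω)` maps `L s ⊆ closure D` into the closure of the tail, hence maps a whole
  -- `δ`-neighbourhood of the compact set `L s` into the `ε/2`-neighbourhood of the tail.
  have hU : L s ⊆ (fun x => ψ.φ s x ω') ⁻¹' thickening (ε / 2) (ψ.pullbackTail D ω T) := by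
    refine fun p hp => closure_subset_thickening (half_pos hε) _ (closure_mono ?_
      (image_closure_subset_closure_image hf ⟨p, hsub hp, rfl⟩))
    exact subset_iUnion₂ (s := fun s' (_ : T ≤ s') => ψ.pullback s' ω '' D) s hsT
  obtain ⟨δ, hδ, hδU⟩ := (hL s).exists_thickening_subset_open (isOpen_thickening.preimage hf) hU
  obtain ⟨t₀, ht₀⟩ := eventually_atTop.1
    ((hatt s).eventually (gt_mem_nhds (ENNReal.ofReal_pos.2 hδ)))
  obtain ⟨t, y, ht, hy, hyz⟩ := ψ.exists_seq_of_mem_omegaLimitSet hz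
  obtain ⟨j, hjt, hjz⟩ := (((tendsto_atTop_mono ht tendsto_natCast_atTop_atTop).eventually_ge_atTop
    (max t₀ 0 + s)).and (hyz (ball_mem_nhds z (half_pos hε)))).exists
  -- By the cocycle property the pullback from time `t j` is `φ(s, ϑ_{-s} ω)` applied to the
  -- pullback from time `t j - s` at `ϑ_{-s} ω`, and the latter is `δ`-close to `L s`.
  have hts : 0 ≤ t j - s := by linarith [le_max_right t₀ 0]
  have hw : ψ.pullback (t j - s) ω' (y j) ∈ thickening δ (L s) :=
    mem_thickening_iff_infEDist_lt.2 <| (infEDist_le_semiDist (mem_image_of_mem _ (hy j))).trans_lt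
      (ht₀ _ (by linarith [le_max_left t₀ 0]))
  have hpull := hδU hw
  rw [mem_preimage, ψ.phi_pullback s.cast_nonneg hts, theta_theta_neg, add_sub_cancel] at hpull
  have hz' := thickening_thickening_subset (ε / 2) (ε / 2) _
    (mem_thickening_iff.2 ⟨_, hpull, by rw [dist_comm]; exact hjz⟩)
  rwa [add_halves] at hz'

theorem infEDist_pullbackTail_range (d : ℕ → E) (ω : Ω) (T : ℕ) (x : E) :
    infEDist x (ψ.pullbackTail (range d) ω T) =
      ⨅ s : ℕ, ⨅ (_ : T ≤ s), ⨅ k, edist x (ψ.pullback s ω (d k)) := by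
  simp only [pullbackTail, infEDist_iUnion, ← range_comp]
  simp only [Metric.infEDist, iInf_range, Function.comp_apply]

theorem exists_seq_ae_frequently_subset [CompleteSpace E] [TopologicalSpace.SeparableSpace E]
    [IsProbabilityMeasure P] {K : Ω → Set E} (hK : IsCompactRandomSet K) :
    ∃ d : ℕ → ℕ → E, (∀ m, IsCompact (closure (range (d m)))) ∧
      ∀ᵐ ω ∂P, ∃ m, ∃ᶠ s : ℕ in atTop, K (ψ.θ (-(s : ℝ)) ω) ⊆ closure (range (d m)) := by
  obtain ⟨ω₀⟩ := nonempty_of_isProbabilityMeasure P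
  obtain ⟨x₀, -⟩ := hK.2.1 ω₀
  have : Nonempty E := ⟨x₀⟩
  choose C hC G hG hGC hGP using fun m : ℕ =>
    hK.exists_isCompact_measure_compl_le (P := P) (ENNReal.inv_ne_zero.2 (natCast_ne_top m))
  choose d hd using fun m => ((hC m).union isCompact_singleton).exists_closure_range_eq
    (union_nonempty.2 (Or.inr (singleton_nonempty x₀)))
  refine ⟨d, fun m => hd m ▸ (hC m).union isCompact_singleton, ?_⟩
  have hex : ∀ᵐ ω ∂P, ∃ m, ω ∈ G m := by
    rw [ae_iff]
    refine nonpos_iff_eq_zero.1 (ge_of_tendsto' ENNReal.tendsto_inv_nat_nhds_zero fun m => ?_)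
    exact (measure_mono fun ω hω => not_exists.1 hω m).trans (hGP m)
  filter_upwards [hex, ae_all_iff.2 fun m => ψ.ae_frequently_theta_neg_nat_mem (hG m)]
    with ω ⟨m, hm⟩ hrec
  exact ⟨m, (hrec m hm).mono fun s hs => (hGC m _ hs).trans (hd m ▸ subset_union_left)⟩

section Candidate

variable (K : Ω → Set E) (d : ℕ → ℕ → E)

def natAttractedSet : Set Ω :=
  {ω | ∀ m, Tendsto (fun s : ℕ => semiDist (ψ.pullback s ω '' range (d m)) (K ω)) atTop (𝓝 0)}

/-- Off the full-measure set `natAttractedSet` the value is irrelevant; `K ω` keeps the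
candidate a compact random set. -/
def attractorCandidate (ω : Ω) : Set E :=
  open Classical in
  if ω ∈ ψ.natAttractedSet K d then closure (⋃ m, ψ.natOmegaLimitSet (range (d m)) ω) else K ω

theorem measurableSet_natAttractedSet [SecondCountableTopology E] [OpensMeasurableSpace E]
    (hK : IsCompactRandomSet K) : MeasurableSet (ψ.natAttractedSet K d) := by
  rw [natAttractedSet, ofPred_forall]
  refine MeasurableSet.iInter fun m => measurableSet_tendsto (𝓝 0) fun s => ?_
  simp only [← range_comp, semiDist_range, Function.comp_apply]
  exact Measurable.iSup fun k => hK.measurable_infEDist (ψ.measurable_pullback _ _)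

theorem tendsto_semiDist_closure_pullbackTail (hω : ω ∈ ψ.natAttractedSet K d) (m : ℕ) :
    Tendsto (fun T => semiDist (closure (ψ.pullbackTail (range (d m)) ω T)) (K ω)) atTop
      (𝓝 0) := by
  simp only [semiDist_closure_left]
  refine ENNReal.tendsto_nhds_zero.2 fun ε hε => ?_
  obtain ⟨N, hN⟩ := eventually_atTop.1 (ENNReal.tendsto_nhds_zero.1 (hω m) ε hε)
  filter_upwards [eventually_ge_atTop N] with T hT
  refine semiDist_le_iff.2 fun b hb => ?_
  simp only [pullbackTail, mem_iUnion] at hb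
  obtain ⟨s, hs, hb⟩ := hb
  exact (infEDist_le_semiDist hb).trans (hN s (hT.trans hs))

theorem natOmegaLimitSet_subset (hK : ∀ ω, IsCompact (K ω)) (hω : ω ∈ ψ.natAttractedSet K d)
    (m : ℕ) : ψ.natOmegaLimitSet (range (d m)) ω ⊆ K ω :=
  iInter_subset_of_tendsto_semiDist (hK ω) (ψ.tendsto_semiDist_closure_pullbackTail K d hω m)

theorem natOmegaLimitSet_nonempty (hK : ∀ ω, IsCompact (K ω))
    (hω : ω ∈ ψ.natAttractedSet K d) (m : ℕ) : (ψ.natOmegaLimitSet (range (d m)) ω).Nonempty :=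
  nonempty_iInter_of_tendsto_semiDist (fun _ => isClosed_closure)
    (fun _ _ h => closure_mono (ψ.pullbackTail_antitone _ ω h)) (hK ω)
    (ψ.tendsto_semiDist_closure_pullbackTail K d hω m) fun T =>
      ⟨_, subset_closure (mem_iUnion₂.2 ⟨T, le_rfl, mem_image_of_mem _ (mem_range_self 0)⟩)⟩

theorem infEDist_natOmegaLimitSet (hK : ∀ ω, IsCompact (K ω)) (hω : ω ∈ ψ.natAttractedSet K d)
    (m : ℕ) (x : E) :
    infEDist x (ψ.natOmegaLimitSet (range (d m)) ω) =
      ⨆ T : ℕ, ⨅ s : ℕ, ⨅ (_ : T ≤ s), ⨅ k, edist x (ψ.pullback s ω (d m k)) := by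
  rw [natOmegaLimitSet, infEDist_iInter_of_tendsto_semiDist (fun _ => isClosed_closure)
    (fun _ _ h => closure_mono (ψ.pullbackTail_antitone _ ω h)) (hK ω)
    (ψ.tendsto_semiDist_closure_pullbackTail K d hω m)]
  simp only [infEDist_closure, infEDist_pullbackTail_range]

theorem isCompactRandomSet_attractorCandidate [SecondCountableTopology E]
    [OpensMeasurableSpace E] (hK : IsCompactRandomSet K) :
    IsCompactRandomSet (ψ.attractorCandidate K d) := by
  have hG := ψ.measurableSet_natAttractedSet K d hK
  refine ⟨fun ω => ?_, fun ω => ?_, fun x => ?_⟩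
  · by_cases hω : ω ∈ ψ.natAttractedSet K d
    · rw [attractorCandidate, if_pos hω]
      exact (hK.1 ω).of_isClosed_subset isClosed_closure
        (closure_minimal (iUnion_subset (ψ.natOmegaLimitSet_subset K d hK.1 hω)) (hK.1 ω).isClosed)
    · rw [attractorCandidate, if_neg hω]
      exact hK.1 ω
  · by_cases hω : ω ∈ ψ.natAttractedSet K d
    · rw [attractorCandidate, if_pos hω]
      exact ((ψ.natOmegaLimitSet_nonempty K d hK.1 hω 0).mono (subset_iUnion _ 0)).closure
    · rw [attractorCandidate, if_neg hω]
      exact hK.2.1 ω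
  · classical
    have hformula : (fun ω => infEDist x (ψ.attractorCandidate K d ω)) = fun ω =>
        if ω ∈ ψ.natAttractedSet K d then
          ⨅ m, ⨆ T : ℕ, ⨅ s : ℕ, ⨅ (_ : T ≤ s), ⨅ k, edist x (ψ.pullback s ω (d m k))
        else infEDist x (K ω) := by
      ext ω
      by_cases hω : ω ∈ ψ.natAttractedSet K d
      · simp only [attractorCandidate, if_pos hω, infEDist_closure, infEDist_iUnion,
          ψ.infEDist_natOmegaLimitSet K d hK.1 hω]
      · simp only [attractorCandidate, if_neg hω]
    refine ENNReal.measurable_toReal.comp (hformula ▸ Measurable.ite hG ?_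
      (hK.measurable_infEDist measurable_const))
    exact .iInf fun m => .iSup fun T => .iInf fun s => .iInf fun _ => .iInf fun k =>
      measurable_const.edist (ψ.measurable_pullback _ _)

theorem ae_mem_natAttractedSet (hD : ∀ m, StronglyAttracts ψ K (range (d m))) :
    ∀ᵐ ω ∂P, ω ∈ ψ.natAttractedSet K d := by
  filter_upwards [ae_all_iff.2 hD] with ω hω m
  exact (hω m).comp tendsto_natCast_atTop_atTop

theorem ae_omegaLimitSet_subset_attractorCandidate (hK : ∀ ω, IsCompact (K ω))
    (hgood : ∀ᵐ ω ∂P, ω ∈ ψ.natAttractedSet K d)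
    (hrec : ∀ᵐ ω ∂P, ∃ m, ∃ᶠ s : ℕ in atTop, K (ψ.θ (-(s : ℝ)) ω) ⊆ closure (range (d m)))
    {B : Set E} (hB : StronglyAttracts ψ K B) :
    ∀ᵐ ω ∂P, omegaLimitSet ψ B ω ⊆ ψ.attractorCandidate K d ω := by
  filter_upwards [hgood, hrec, ae_all_iff.2 fun s : ℕ => ψ.ae_theta (-(s : ℝ)) hB]
    with ω hω ⟨m, hm⟩ hBω z hz
  rw [attractorCandidate, if_pos hω]
  exact subset_closure
    (mem_iUnion.2 ⟨m, ψ.mem_natOmegaLimitSet_of_frequently (fun _ => hK _) hBω hm hz⟩)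

theorem attractorCandidate_ae_eq (hK : ∀ ω, IsCompact (K ω))
    (hgood : ∀ᵐ ω ∂P, ω ∈ ψ.natAttractedSet K d)
    (hrec : ∀ᵐ ω ∂P, ∃ m, ∃ᶠ s : ℕ in atTop, K (ψ.θ (-(s : ℝ)) ω) ⊆ closure (range (d m)))
    (hD : ∀ m, StronglyAttracts ψ K (range (d m))) :
    ∀ᵐ ω ∂P, ψ.attractorCandidate K d ω = closure (⋃ m, omegaLimitSet ψ (range (d m)) ω) := by
  filter_upwards [hgood, ae_all_iff.2 fun m =>
    ψ.ae_omegaLimitSet_subset_attractorCandidate K d hK hgood hrec (hD m)] with ω hω hsub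
  have hA : ψ.attractorCandidate K d ω = closure (⋃ m, ψ.natOmegaLimitSet (range (d m)) ω) :=
    if_pos hω
  refine Subset.antisymm ?_ (closure_minimal (iUnion_subset hsub) (hA ▸ isClosed_closure))
  exact hA ▸ closure_mono (iUnion_mono fun m => ψ.natOmegaLimitSet_subset_omegaLimitSet _ ω)

end Candidate

end ContinuousRDS

/-- If there is a compact random set `K` strongly attracting every compact subset of `E`,
then `φ` has a strong `C`-attractor. -/
theorem strongC_attractor_of_strongly_attracting_set
    [CompleteSpace E] [SecondCountableTopology E] [BorelSpace E] [IsProbabilityMeasure P]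
    (ψ : ContinuousRDS E Ω P) (K : Ω → Set E) (hK : IsCompactRandomSet K)
    (hattr : ∀ C : Set E, IsCompact C → StronglyAttracts ψ K C) :
    ∃ A : Ω → Set E, IsStrongAttractor ψ {C : Set E | IsCompact C} A := by
  obtain ⟨d, hdc, hrec⟩ := ψ.exists_seq_ae_frequently_subset hK
  have hD : ∀ m, StronglyAttracts ψ K (range (d m)) := fun m =>
    (hattr _ (hdc m)).mono subset_closure
  have hgood := ψ.ae_mem_natAttractedSet K d hD
  have hAeq := ψ.attractorCandidate_ae_eq K d hK.1 hgood hrec hD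
  refine ⟨ψ.attractorCandidate K d, ψ.isCompactRandomSet_attractorCandidate K d hK,
    fun t ht => ?_, fun B hB => ?_⟩
  · filter_upwards [hAeq, ψ.ae_theta t hAeq, ae_all_iff.2 hD] with ω hω hθω hDω
    rw [hω, hθω]
    exact ψ.image_closure_iUnion_omegaLimitSet (hK.1 ω) hDω ht
  · filter_upwards [hattr B hB,
      ψ.ae_omegaLimitSet_subset_attractorCandidate K d hK.1 hgood hrec (hattr B hB)] with ω hBω hsub
    exact tendsto_semiDist_mono (ψ.tendsto_semiDist_omegaLimitSet (hK.1 ω) hBω)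
      (fun _ => subset_rfl) hsub
end
end
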